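/- arXiv:1611.00783 — 3 statements merged into one kernel-verified Lean document; each statement's English description precedes it below -/
import Mathlib

section
/- Let n, k, d be positive integers and ε > 0, ε′ > 0 reals, δ ≥ 2^{−n}, and 0 < δ′ < 0.2. Suppose S is a one-query (ε′,δ′)-steward with randomness complexity m for k adaptively chosen (ε,δ)-concentrated functions f : {0,1}^n → ℝ^d. Then m ≥ (n − 2) + (k−1)·log₂(5/4) − log₂(δ′/δ). -/
open Classical

/-- Probability of `P` under the uniform distribution on a finite type. -/
noncomputable def pr {α : Type*} [Fintype α] (P : α → Prop) : ℝ :=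
  ((Finset.univ.filter P).card : ℝ) / (Fintype.card α : ℝ)

/-- `f : {0,1}^n → ℝ^d` is `(ε,δ)`-concentrated at `μ`. -/
def Concentrated (n d : ℕ) (ε δ : ℝ)
    (f : (Fin n → Bool) → Fin d → ℝ) (μ : Fin d → ℝ) : Prop :=
  pr (fun X : Fin n → Bool => ∃ j, |f X j - μ j| > ε) ≤ δ

/-- A deterministic owner for `k` rounds of `(ε,δ)`-concentrated functions
`{0,1}^n → ℝ^d`: given the history of responses `Y_1,…,Y_{i-1}`, it produces
a function `f_i` together with a point `μ_i` at which `f_i` is concentrated. -/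
structure Owner (n k d : ℕ) (ε δ : ℝ) where
  act : List (Fin d → ℝ) → (((Fin n → Bool) → Fin d → ℝ) × (Fin d → ℝ))
  conc : ∀ ys : List (Fin d → ℝ), ys.length < k →
    Concentrated n d ε δ (act ys).1 (act ys).2

/-- A one-query steward with randomness complexity `m`: in each round it chooses
a query point from its randomness and the past query answers, and it chooses a
response from its randomness and the past and current query answers. -/
structure Steward (n k d m : ℕ) where
  q : (Fin m → Bool) → List (Fin d → ℝ) → (Fin n → Bool)
  r : (Fin m → Bool) → List (Fin d → ℝ) → (Fin d → ℝ) → (Fin d → ℝ)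

/-- The interaction `O ↔ S(Z)` for `i` rounds: the list of triples `(Y_i, W_i, μ_i)`. -/
noncomputable def run {n k d m : ℕ} {ε δ : ℝ} (O : Owner n k d ε δ) (S : Steward n k d m)
    (Z : Fin m → Bool) : ℕ → List ((Fin d → ℝ) × (Fin d → ℝ) × (Fin d → ℝ))
  | 0 => []
  | i + 1 =>
    let h := run O S Z i
    let fμ := O.act (h.map fun p => p.1)
    let X := S.q Z (h.map fun p => p.2.1)
    let W := fμ.1 X
    h ++ [(S.r Z (h.map fun p => p.2.1) W, W, fμ.2)]

/-- `S` is a one-query `(ε',δ')`-steward for `k` adaptively chosen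
`(ε,δ)`-concentrated functions `{0,1}^n → ℝ^d`. -/
def IsSteward (n k d m : ℕ) (ε δ ε' δ' : ℝ) (S : Steward n k d m) : Prop :=
  ∀ O : Owner n k d ε δ,
    pr (fun Z : Fin m → Bool =>
      ∃ p ∈ run O S Z k, ∃ j : Fin d, |p.1 j - p.2.2 j| > ε') ≤ δ'

/-!
The owner plays against all `2^m` random seeds of `S` at once: knowing `S`, it tracks the set `C`
of seeds consistent with the responses published so far. In a round before the last it either
makes a fifth of `C` err, or makes sure that no response is given by more than `4/5` of `C`. If a
fifth of `C` queries the same point, planting a far-off value there makes them err. Otherwise the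
owner probes `S` with the constant functions `c` for `c ∈ ε ℕ`. If some `c` has no majority
response (shared by more than `4/5` of `C`) within `ε'` of `c`, that probe does the job. Otherwise
the majority responses at `0` and at some `T ε > 2 ε'` differ, hence so do those at two neighbours
`c` and `c + ε`; a function equal to `c` on one half and to `c + ε` on the other half of a balanced
split of the queried points, centred at `c + ε / 2`, then separates the seeds. In the last round,
planting a far-off value on `⌊δ 2^n⌋` queried points makes `min (#C) ⌊δ 2^n⌋` seeds err. By
induction, with `j + 1` rounds to go at least `min (#C / 5) (⌊δ 2^n⌋ (5/4)^j)` seeds err, so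
`δ' < 1/5` forces `⌊δ 2^n⌋ (5/4)^(k-1) ≤ δ' 2^m`, which is the bound after taking logarithms.
-/

open Finset

theorem exists_forall_lt_abs_sub (s : Finset ℝ) (r : ℝ) : ∃ t : ℝ, ∀ x ∈ s, r < |x - t| := by
  obtain ⟨M, hM⟩ := s.bddAbove
  refine ⟨M + |r| + 1, fun x hx => ?_⟩
  have hxM : x ≤ M := hM hx
  rw [abs_sub_comm, abs_of_pos (by linarith [abs_nonneg r])]
  linarith [le_abs_self r]

theorem exists_ne_succ_of_ne {α : Type*} {f : ℕ → α} {T : ℕ} (h : f 0 ≠ f T) :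
    ∃ t, f t ≠ f (t + 1) := by
  by_contra! hf
  exact h (Nat.rec rfl (fun t ih => ih.trans (hf t)) T)

theorem min_sum_le_sum_min {ι : Type*} (T : Finset ι) (a : ι → ℝ) {c : ℝ} (hc : 0 ≤ c)
    (ha : ∀ i ∈ T, 0 ≤ a i) : min (∑ i ∈ T, a i) c ≤ ∑ i ∈ T, min (a i) c := by
  by_cases hbig : ∃ i ∈ T, c ≤ a i
  · obtain ⟨i, hi, hci⟩ := hbig
    calc min (∑ i ∈ T, a i) c ≤ min (a i) c := by rw [min_eq_right hci]; exact min_le_right _ _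
      _ ≤ ∑ i ∈ T, min (a i) c :=
        single_le_sum (f := fun i => min (a i) c) (fun j hj => le_min (ha j hj) hc) hi
  · push Not at hbig
    rw [sum_congr rfl fun i hi => min_eq_left (hbig i hi).le]
    exact min_le_left _ _

theorem min_div_five_le_of_split {ι : Type*} (T : Finset ι) (N' E' : ι → ℝ) {N E c : ℝ}
    (hc : 0 ≤ c) (hN' : ∀ i ∈ T, 0 ≤ N' i) (hN : ∑ i ∈ T, N' i = N)
    (hE : ∑ i ∈ T, E' i ≤ E) (hcell : ∀ i ∈ T, 5 * N' i ≤ 4 * N)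
    (hE' : ∀ i ∈ T, min (N' i / 5) c ≤ E' i) : min (N / 5) (5 / 4 * c) ≤ E := by
  classical
  by_cases hbig : ∃ i ∈ T, c < N' i / 5
  · obtain ⟨i, hi, hci⟩ := hbig
    -- cell `i` yields `c`, the others have mass `≥ N / 5 > 5/4 * c` and so yield `≥ c / 4`
    have hrest : ∑ j ∈ T.erase i, N' j = N - N' i := by
      rw [← hN, ← add_sum_erase T N' hi]; ring
    have hrestE : min ((N - N' i) / 5) c ≤ ∑ j ∈ T.erase i, E' j := by
      rw [← hrest, sum_div]
      refine (min_sum_le_sum_min _ _ hc fun j hj => ?_).trans (sum_le_sum fun j hj => ?_)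
      · exact div_nonneg (hN' j (mem_of_mem_erase hj)) (by norm_num)
      · exact hE' j (mem_of_mem_erase hj)
    have hEi : c ≤ E' i := by simpa [min_eq_right hci.le] using hE' i hi
    have hsplit := add_sum_erase T E' hi
    have := hcell i hi
    refine (min_le_right _ _).trans ?_
    rcases min_cases ((N - N' i) / 5) c with ⟨hm, _⟩ | ⟨hm, _⟩ <;> linarith
  · push Not at hbig
    calc min (N / 5) (5 / 4 * c) ≤ N / 5 := min_le_left _ _
      _ = ∑ i ∈ T, N' i / 5 := by rw [← hN, sum_div]
      _ ≤ ∑ i ∈ T, E' i := sum_le_sum fun i hi => by simpa [min_eq_left (hbig i hi)] using hE' i hi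
      _ ≤ E := hE

theorem exists_balanced_split {Ω X : Type*} [Fintype X] [DecidableEq X] (D : Finset Ω)
    (Q : Ω → X) (N : ℕ) (hatom : ∀ x, 5 * #(D.filter (Q · = x)) < N) (hD : 3 * N < 5 * #D) :
    ∃ H : Finset X, N ≤ 5 * #(D.filter (Q · ∈ H)) ∧ N ≤ 5 * #(D.filter (Q · ∉ H)) := by
  obtain ⟨H, hH, hmin⟩ := exists_min_image
    ((univ : Finset (Finset X)).filter fun H => N ≤ 5 * #(D.filter (Q · ∈ H))) card
    ⟨univ, mem_filter.2 ⟨mem_univ _, by simp only [mem_univ, filter_true]; omega⟩⟩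
  replace hH := (mem_filter.1 hH).2
  obtain ⟨x, hx⟩ : H.Nonempty := by
    obtain ⟨Z, -⟩ := card_pos.1 (by omega : 0 < #D)
    refine nonempty_iff_ne_empty.2 fun hH0 => ?_
    have := hatom (Q Z)
    simp only [hH0, notMem_empty, filter_false, card_empty] at hH
    omega
  have herase : 5 * #(D.filter (Q · ∈ H.erase x)) < N := by
    by_contra! h
    have := hmin _ (mem_filter.2 ⟨mem_univ _, h⟩)
    have := card_erase_lt_of_mem hx
    omega
  have hcover : D.filter (Q · ∈ H) ⊆ D.filter (Q · ∈ H.erase x) ∪ D.filter (Q · = x) := by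
    intro Z
    simp only [mem_filter, mem_union, mem_erase]
    tauto
  have := (card_le_card hcover).trans (card_union_le _ _)
  have := card_filter_add_card_filter_not (s := D) (Q · ∈ H)
  have := hatom x
  exact ⟨H, hH, by omega⟩

section Moves

variable {n d : ℕ} {ε δ : ℝ}

theorem concentrated_of_forall_notMem {f : (Fin n → Bool) → Fin d → ℝ} {μ : Fin d → ℝ}
    (B : Finset (Fin n → Bool)) (hB : (#B : ℝ) ≤ δ * 2 ^ n)
    (hf : ∀ x ∉ B, ∀ j, |f x j - μ j| ≤ ε) : Concentrated n d ε δ f μ := by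
  unfold Concentrated pr
  rw [div_le_iff₀ (by simp), Fintype.card_fun, Fintype.card_bool, Fintype.card_fin]
  push_cast
  refine le_trans ?_ hB
  exact_mod_cast card_le_card fun x hx => by
    by_contra hxB
    simp only [mem_filter] at hx
    obtain ⟨j, hj⟩ := hx.2
    exact (hf x hxB j).not_gt hj

theorem concentrated_of_forall {f : (Fin n → Bool) → Fin d → ℝ} {μ : Fin d → ℝ} (hδ : 0 ≤ δ)
    (hf : ∀ x j, |f x j - μ j| ≤ ε) : Concentrated n d ε δ f μ :=
  concentrated_of_forall_notMem ∅ (by simp only [card_empty, CharP.cast_eq_zero]; positivity)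
    fun x _ => hf x

variable {Ω : Type*} (ε' : ℝ) (C : Finset Ω) (Q : Ω → Fin n → Bool)
  (R : Ω → (Fin d → ℝ) → Fin d → ℝ)

noncomputable def errors (f : (Fin n → Bool) → Fin d → ℝ) (μ : Fin d → ℝ) : Finset Ω :=
  C.filter fun Z => ∃ j, ε' < |R Z (f (Q Z)) j - μ j|

def KillsOrSplits (f : (Fin n → Bool) → Fin d → ℝ) (μ : Fin d → ℝ) : Prop :=
  #C ≤ 5 * #(errors ε' C Q R f μ) ∨ ∀ v, 5 * #(C.filter fun Z => R Z (f (Q Z)) = v) ≤ 4 * #C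

def IsMajorityAnswer (w v : Fin d → ℝ) : Prop :=
  4 * #C < 5 * #(C.filter fun Z => R Z w = v)

/-- Plant `0` on `B` and elsewhere a constant far from every response to `0`. -/
theorem exists_filter_subset_errors (hd : 0 < d) (hε : 0 ≤ ε) (B : Finset (Fin n → Bool))
    (hB : (#B : ℝ) ≤ δ * 2 ^ n) :
    ∃ f μ, Concentrated n d ε δ f μ ∧ C.filter (Q · ∈ B) ⊆ errors ε' C Q R f μ := by
  obtain ⟨c, hc⟩ := exists_forall_lt_abs_sub (C.image fun Z => R Z 0 ⟨0, hd⟩) ε'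
  refine ⟨fun x => if x ∈ B then 0 else fun _ => c, fun _ => c,
    concentrated_of_forall_notMem B hB fun x hx j => by simpa [hx] using hε, fun Z hZ => ?_⟩
  obtain ⟨hZC, hZB⟩ := mem_filter.1 hZ
  exact mem_filter.2 ⟨hZC, ⟨0, hd⟩, by simpa [hZB] using hc _ (mem_image_of_mem _ hZC)⟩

theorem exists_min_card_le_card_errors (hd : 0 < d) (hε : 0 ≤ ε) (hδ : 0 ≤ δ) :
    ∃ f μ, Concentrated n d ε δ f μ ∧ min #C ⌊δ * 2 ^ n⌋₊ ≤ #(errors ε' C Q R f μ) := by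
  obtain ⟨C', hC'C, hC'⟩ := exists_subset_card_eq (min_le_left #C ⌊δ * 2 ^ n⌋₊)
  have hB : (#(C'.image Q) : ℝ) ≤ δ * 2 ^ n :=
    calc (#(C'.image Q) : ℝ) ≤ #C' := by exact_mod_cast card_image_le
      _ ≤ ⌊δ * 2 ^ n⌋₊ := by exact_mod_cast hC' ▸ min_le_right _ _
      _ ≤ δ * 2 ^ n := Nat.floor_le (by positivity)
  obtain ⟨f, μ, hf, hsub⟩ := exists_filter_subset_errors ε' C Q R hd hε _ hB
  refine ⟨f, μ, hf, hC' ▸ card_le_card fun Z hZ => hsub ?_⟩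
  exact mem_filter.2 ⟨hC'C hZ, mem_image_of_mem Q hZ⟩

theorem exists_killsOrSplits_of_heavy_query (hd : 0 < d) (hε : 0 ≤ ε) (hδ : 1 ≤ δ * 2 ^ n)
    (x : Fin n → Bool) (hx : #C ≤ 5 * #(C.filter (Q · = x))) :
    ∃ f μ, Concentrated n d ε δ f μ ∧ KillsOrSplits ε' C Q R f μ := by
  obtain ⟨f, μ, hf, hsub⟩ :=
    exists_filter_subset_errors ε' C Q R hd hε {x} (by simpa using hδ)
  refine ⟨f, μ, hf, Or.inl (hx.trans ?_)⟩
  simpa using card_le_card hsub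

theorem exists_killsOrSplits_of_const (hε : 0 ≤ ε) (hδ : 0 ≤ δ) (w : Fin d → ℝ)
    (hw : ∀ v, IsMajorityAnswer C R w v → ∃ j, ε' < |v j - w j|) :
    ∃ f μ, Concentrated n d ε δ f μ ∧ KillsOrSplits ε' C Q R f μ := by
  refine ⟨fun _ => w, w, concentrated_of_forall hδ fun x j => by simpa using hε, ?_⟩
  by_cases hmaj : ∃ v, IsMajorityAnswer C R w v
  · obtain ⟨v, hv⟩ := hmaj
    obtain ⟨j, hj⟩ := hw v hv
    have hsub : C.filter (R · w = v) ⊆ errors ε' C Q R (fun _ => w) w := fun Z hZ => by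
      obtain ⟨hZC, hZv⟩ := mem_filter.1 hZ
      exact mem_filter.2 ⟨hZC, j, by simpa [hZv] using hj⟩
    have := card_le_card hsub
    exact Or.inl (by unfold IsMajorityAnswer at hv; omega)
  · push Not at hmaj
    exact Or.inr fun v => by simpa [IsMajorityAnswer] using hmaj v

theorem exists_killsOrSplits_of_two_majorities (hδ : 0 ≤ δ) {a b M₀ M₁ : Fin d → ℝ}
    (hab : ∀ j, |a j - b j| ≤ 2 * ε) (hM : M₀ ≠ M₁) (h₀ : IsMajorityAnswer C R a M₀)
    (h₁ : IsMajorityAnswer C R b M₁) (hlight : ∀ x, 5 * #(C.filter (Q · = x)) < #C) :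
    ∃ f μ, Concentrated n d ε δ f μ ∧ KillsOrSplits ε' C Q R f μ := by
  classical
  set D := C.filter fun Z => R Z a = M₀ ∧ R Z b = M₁
  have hDC : D ⊆ C := filter_subset _ _
  have hD : 3 * #C < 5 * #D := by
    have hie := card_union_add_card_inter (C.filter (R · a = M₀)) (C.filter (R · b = M₁))
    have := card_le_card
      (union_subset (filter_subset (R · a = M₀) C) (filter_subset (R · b = M₁) C))
    rw [← filter_and] at hie
    change _ + #D = _ at hie
    unfold IsMajorityAnswer at h₀ h₁
    omega
  obtain ⟨H, hH, hHc⟩ := exists_balanced_split D Q #C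
    (fun x => (Nat.mul_le_mul_left 5 (card_le_card (filter_subset_filter (Q · = x) hDC))).trans_lt
      (hlight x)) hD
  set f : (Fin n → Bool) → Fin d → ℝ := fun x => if x ∈ H then a else b
  refine ⟨f, fun j => (a j + b j) / 2, concentrated_of_forall hδ fun x j => ?_, Or.inr fun v => ?_⟩
  · have := abs_le.1 (hab j)
    simp only [f]
    split_ifs <;> rw [abs_le] <;> constructor <;> linarith
  -- a side of `D` holding a fifth of `C` answers something other than `v`
  have hcell : ∀ B ⊆ C, #C ≤ 5 * #B → (∀ Z ∈ B, R Z (f (Q Z)) ≠ v) →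
      5 * #(C.filter fun Z => R Z (f (Q Z)) = v) ≤ 4 * #C := by
    intro B hBC hB hBv
    have hdisj : Disjoint (C.filter fun Z => R Z (f (Q Z)) = v) B :=
      disjoint_left.2 fun Z hZ hZB => hBv Z hZB (mem_filter.1 hZ).2
    have := card_union_of_disjoint hdisj
    have := card_le_card (union_subset (filter_subset (fun Z => R Z (f (Q Z)) = v) C) hBC)
    omega
  by_cases hv : v = M₀
  · refine hcell (D.filter (Q · ∉ H)) ((filter_subset _ _).trans hDC) hHc fun Z hZ => ?_
    obtain ⟨hZD, hZH⟩ := mem_filter.1 hZ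
    simp only [f, if_neg hZH, (mem_filter.1 hZD).2.2, hv]
    exact hM.symm
  · refine hcell (D.filter (Q · ∈ H)) ((filter_subset _ _).trans hDC) hH fun Z hZ => ?_
    obtain ⟨hZD, hZH⟩ := mem_filter.1 hZ
    simp only [f, if_pos hZH, (mem_filter.1 hZD).2.1]
    exact Ne.symm hv

theorem exists_killsOrSplits (hd : 0 < d) (hε : 0 < ε) (hδ : 1 ≤ δ * 2 ^ n) :
    ∃ f μ, Concentrated n d ε δ f μ ∧ KillsOrSplits ε' C Q R f μ := by
  have hδ0 : 0 ≤ δ := nonneg_of_mul_nonneg_left (zero_le_one.trans hδ) (by positivity)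
  by_cases hheavy : ∃ x, #C ≤ 5 * #(C.filter (Q · = x))
  · obtain ⟨x, hx⟩ := hheavy
    exact exists_killsOrSplits_of_heavy_query ε' C Q R hd hε.le hδ x hx
  push Not at hheavy
  by_cases hlegal : ∀ c : ℝ, ∃ v, IsMajorityAnswer C R (fun _ => c) v ∧ ∀ j, |v j - c| ≤ ε'
  · choose M hM hMc using hlegal
    -- the majority answers at `0` and at `T * ε > 2 * ε'` differ
    obtain ⟨T, hT⟩ := exists_nat_gt (2 * ε' / ε)
    obtain ⟨t, ht⟩ := exists_ne_succ_of_ne (f := fun t : ℕ => M (t * ε)) (T := T) fun h => by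
      have h0 := abs_le.1 (hMc 0 ⟨0, hd⟩)
      have hT' := abs_le.1 (hMc (T * ε) ⟨0, hd⟩)
      simp only [CharP.cast_eq_zero, zero_mul] at h
      rw [← h] at hT'
      rw [div_lt_iff₀ hε] at hT
      linarith
    refine exists_killsOrSplits_of_two_majorities ε' C Q R hδ0 (fun j => ?_) ht (hM _) (hM _)
      hheavy
    rw [Nat.cast_succ, add_mul, sub_add_cancel_left, abs_neg, one_mul, abs_of_pos hε]
    linarith
  · push Not at hlegal
    obtain ⟨c, hc⟩ := hlegal
    exact exists_killsOrSplits_of_const ε' C Q R hε.le hδ0 _ hc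

end Moves

section Run

variable {n k d m : ℕ} {ε δ : ℝ} (O : Owner n k d ε δ) (S : Steward n k d m) (Z : Fin m → Bool)

theorem run_length (i : ℕ) : (run O S Z i).length = i := by
  induction i with
  | zero => rfl
  | succ i ih => simp [run, ih]

theorem run_prefix {i j : ℕ} (h : i ≤ j) : run O S Z i <+: run O S Z j := by
  induction j, h using Nat.le_induction with
  | base => exact List.prefix_refl _
  | succ j _ ih => exact ih.trans (List.prefix_append _ _)

end Run

namespace Steward

variable {n k d m : ℕ} (S : Steward n k d m)

/-- The arguments are the round index, the seeds consistent with the responses so far, and the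
answers each seed has received. -/
abbrev OwnerRule (n d m : ℕ) : Type :=
  ℕ → Finset (Fin m → Bool) → ((Fin m → Bool) → List (Fin d → ℝ)) →
    ((Fin n → Bool) → Fin d → ℝ) × (Fin d → ℝ)

section Tracking

variable (g : OwnerRule n d m)

/-- For a response history `t`, listed most recent first, the seeds that produce it against an
owner following `g`, together with the answers (oldest first) each seed has received. -/
noncomputable def track :
    List (Fin d → ℝ) → Finset (Fin m → Bool) × ((Fin m → Bool) → List (Fin d → ℝ))
  | [] => (univ, fun _ => [])
  | y :: t =>
    let C := (track t).1
    let wh := (track t).2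
    let W := fun Z => (g t.length C wh).1 (S.q Z (wh Z))
    (C.filter fun Z => S.r Z (wh Z) (W Z) = y, fun Z => wh Z ++ [W Z])

noncomputable def seeds (t : List (Fin d → ℝ)) : Finset (Fin m → Bool) := (S.track g t).1

noncomputable def answers (t : List (Fin d → ℝ)) (Z : Fin m → Bool) : List (Fin d → ℝ) :=
  (S.track g t).2 Z

noncomputable def move (t : List (Fin d → ℝ)) : ((Fin n → Bool) → Fin d → ℝ) × (Fin d → ℝ) :=
  g t.length (S.seeds g t) (S.answers g t)

noncomputable def query (t : List (Fin d → ℝ)) (Z : Fin m → Bool) : Fin n → Bool :=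
  S.q Z (S.answers g t Z)

noncomputable def response (t : List (Fin d → ℝ)) (Z : Fin m → Bool) : Fin d → ℝ :=
  S.r Z (S.answers g t Z) ((S.move g t).1 (S.query g t Z))

theorem seeds_nil : S.seeds g [] = univ := rfl

theorem seeds_cons (y : Fin d → ℝ) (t : List (Fin d → ℝ)) :
    S.seeds g (y :: t) = (S.seeds g t).filter (S.response g t · = y) := rfl

theorem answers_cons (y : Fin d → ℝ) (t : List (Fin d → ℝ)) (Z : Fin m → Bool) :
    S.answers g (y :: t) Z = S.answers g t Z ++ [(S.move g t).1 (S.query g t Z)] := rfl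

variable {ε δ : ℝ} (hg : ∀ i C wh, Concentrated n d ε δ (g i C wh).1 (g i C wh).2)

noncomputable def toOwner : Owner n k d ε δ where
  act ys := S.move g ys.reverse
  conc _ _ := hg _ _ _

theorem toOwner_act (ys : List (Fin d → ℝ)) : (S.toOwner g hg).act ys = S.move g ys.reverse :=
  rfl

theorem run_succ_of_map_eq {t : List (Fin d → ℝ)} {Z : Fin m → Bool}
    (hY : (run (S.toOwner g hg) S Z t.length).map (·.1) = t.reverse)
    (hW : (run (S.toOwner g hg) S Z t.length).map (·.2.1) = S.answers g t Z) :
    run (S.toOwner g hg) S Z (t.length + 1) = run (S.toOwner g hg) S Z t.length ++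
      [(S.response g t Z, (S.move g t).1 (S.query g t Z), (S.move g t).2)] := by
  simp only [run]
  rw [hY, hW, toOwner_act, List.reverse_reverse]
  rfl

theorem map_run_of_mem_seeds {t : List (Fin d → ℝ)} {Z : Fin m → Bool} (hZ : Z ∈ S.seeds g t) :
    (run (S.toOwner g hg) S Z t.length).map (·.1) = t.reverse ∧
      (run (S.toOwner g hg) S Z t.length).map (·.2.1) = S.answers g t Z := by
  induction t with
  | nil => exact ⟨rfl, rfl⟩
  | cons y t ih =>
    rw [seeds_cons, mem_filter] at hZ
    obtain ⟨hY, hW⟩ := ih hZ.1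
    rw [List.length_cons, S.run_succ_of_map_eq g hg hY hW, answers_cons, List.map_append,
      List.map_append, hY, hW, ← hZ.2]
    simp

theorem run_succ_of_mem_seeds {t : List (Fin d → ℝ)} {Z : Fin m → Bool} (hZ : Z ∈ S.seeds g t) :
    run (S.toOwner g hg) S Z (t.length + 1) = run (S.toOwner g hg) S Z t.length ++
      [(S.response g t Z, (S.move g t).1 (S.query g t Z), (S.move g t).2)] :=
  S.run_succ_of_map_eq g hg (S.map_run_of_mem_seeds g hg hZ).1 (S.map_run_of_mem_seeds g hg hZ).2

variable (ε' : ℝ)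

noncomputable def tailErrors (t : List (Fin d → ℝ)) : Finset (Fin m → Bool) :=
  (S.seeds g t).filter fun Z =>
    ∃ p ∈ (run (S.toOwner g hg) S Z k).drop t.length, ∃ j, |p.1 j - p.2.2 j| > ε'

theorem errors_subset_tailErrors {t : List (Fin d → ℝ)} (ht : t.length < k) :
    errors ε' (S.seeds g t) (S.query g t) (fun Z => S.r Z (S.answers g t Z)) (S.move g t).1
      (S.move g t).2 ⊆ S.tailErrors g hg ε' t := by
  intro Z hZ
  obtain ⟨hZt, j, hj⟩ := mem_filter.1 hZ
  refine mem_filter.2 ⟨hZt, (S.response g t Z, (S.move g t).1 (S.query g t Z), (S.move g t).2),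
    ?_, j, hj⟩
  obtain ⟨u, hu⟩ := run_prefix (S.toOwner g hg) S Z ht
  rw [← hu, S.run_succ_of_mem_seeds g hg hZt, List.append_assoc,
    List.drop_left' (run_length _ S Z _)]
  exact List.mem_cons_self

theorem tailErrors_cons_subset (v : Fin d → ℝ) (t : List (Fin d → ℝ)) :
    S.tailErrors g hg ε' (v :: t) ⊆ (S.tailErrors g hg ε' t).filter (S.response g t · = v) := by
  intro Z hZ
  obtain ⟨hZvt, p, hp, hperr⟩ := mem_filter.1 hZ
  obtain ⟨hZt, hZv⟩ := mem_filter.1 hZvt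
  refine mem_filter.2 ⟨mem_filter.2 ⟨hZt, p, ?_, hperr⟩, hZv⟩
  rw [List.length_cons, ← List.drop_drop] at hp
  exact List.mem_of_mem_drop hp

theorem min_le_card_tailErrors {s : ℕ}
    (hlast : ∀ i C wh, i + 1 = k → min #C s ≤ #(errors ε' C (fun Z => S.q Z (wh Z))
      (fun Z => S.r Z (wh Z)) (g i C wh).1 (g i C wh).2))
    (hsplit : ∀ i C wh, i + 1 < k → KillsOrSplits ε' C (fun Z => S.q Z (wh Z))
      (fun Z => S.r Z (wh Z)) (g i C wh).1 (g i C wh).2)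
    (j : ℕ) (t : List (Fin d → ℝ)) (ht : t.length + j + 1 = k) :
    min ((#(S.seeds g t) : ℝ) / 5) (s * (5 / 4) ^ j) ≤ #(S.tailErrors g hg ε' t) := by
  induction j generalizing t with
  | zero =>
    have hcard := (hlast t.length (S.seeds g t) (S.answers g t) (by omega)).trans
      (card_le_card (S.errors_subset_tailErrors g hg ε' (t := t) (by omega)))
    rw [pow_zero, mul_one]
    refine le_trans (min_le_min_right _ (div_le_self (Nat.cast_nonneg _) (by norm_num))) ?_
    exact_mod_cast hcard
  | succ j ih =>
    have hsub := S.errors_subset_tailErrors g hg ε' (t := t) (by omega)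
    rcases hsplit t.length (S.seeds g t) (S.answers g t) (by omega) with hkill | hcells
    · refine (min_le_left _ _).trans ((div_le_iff₀ (by norm_num)).2 ?_)
      rw [mul_comm]
      exact_mod_cast hkill.trans (Nat.mul_le_mul_left 5 (card_le_card hsub))
    · have hmaps : Set.MapsTo (S.response g t) (S.seeds g t)
          ((S.seeds g t).image (S.response g t)) := fun Z hZ => mem_image_of_mem _ hZ
      rw [pow_succ, ← mul_assoc, mul_comm _ (5 / 4 : ℝ)]
      refine min_div_five_le_of_split ((S.seeds g t).image (S.response g t))
        (fun v => #(S.seeds g (v :: t)))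
        (fun v => #(S.tailErrors g hg ε' (v :: t))) (by positivity) (fun _ _ => Nat.cast_nonneg _)
        ?_ ?_ (fun v _ => ?_) (fun v _ => ih (v :: t) (by simp only [List.length_cons]; omega))
      · exact_mod_cast (card_eq_sum_card_fiberwise hmaps).symm
      · rw [card_eq_sum_card_fiberwise (s := S.tailErrors g hg ε' t) fun Z hZ =>
          hmaps (mem_filter.1 hZ).1]
        push_cast
        exact sum_le_sum fun v _ => by
          exact_mod_cast card_le_card (S.tailErrors_cons_subset g hg ε' v t)
      · exact_mod_cast hcells v

end Tracking

variable {ε δ : ℝ} (ε' : ℝ)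

theorem exists_ownerRule (hd : 0 < d) (hε : 0 < ε) (hδ : 1 ≤ δ * 2 ^ n) :
    ∃ g : OwnerRule n d m, (∀ i C wh, Concentrated n d ε δ (g i C wh).1 (g i C wh).2) ∧
      (∀ i C wh, i + 1 = k → min #C ⌊δ * 2 ^ n⌋₊ ≤ #(errors ε' C (fun Z => S.q Z (wh Z))
        (fun Z => S.r Z (wh Z)) (g i C wh).1 (g i C wh).2)) ∧
      ∀ i C wh, i + 1 < k → KillsOrSplits ε' C (fun Z => S.q Z (wh Z)) (fun Z => S.r Z (wh Z))
        (g i C wh).1 (g i C wh).2 := by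
  have hδ0 : 0 ≤ δ := nonneg_of_mul_nonneg_left (zero_le_one.trans hδ) (by positivity)
  choose f₁ μ₁ hconc₁ hlast using fun (C : Finset (Fin m → Bool)) (wh : _ → List (Fin d → ℝ)) =>
    exists_min_card_le_card_errors ε' C (fun Z => S.q Z (wh Z)) (fun Z => S.r Z (wh Z)) hd hε.le hδ0
  choose f₂ μ₂ hconc₂ hsplit using fun (C : Finset (Fin m → Bool)) (wh : _ → List (Fin d → ℝ)) =>
    exists_killsOrSplits ε' C (fun Z => S.q Z (wh Z)) (fun Z => S.r Z (wh Z)) hd hε hδ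
  refine ⟨fun i C wh => if i + 1 < k then (f₂ C wh, μ₂ C wh) else (f₁ C wh, μ₁ C wh),
    fun i C wh => ?_, fun i C wh hi => ?_, fun i C wh hi => ?_⟩
  · dsimp only
    split_ifs
    exacts [hconc₂ C wh, hconc₁ C wh]
  · simpa only [hi, lt_irrefl, if_false] using hlast C wh
  · simpa only [hi, if_true] using hsplit C wh

theorem floor_mul_pow_le_of_isSteward {δ' : ℝ} (hk : 0 < k) (hd : 0 < d) (hε : 0 < ε)
    (hδ : 1 ≤ δ * 2 ^ n) (hδ' : δ' < 1 / 5) (hS : IsSteward n k d m ε δ ε' δ' S) :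
    (⌊δ * 2 ^ n⌋₊ : ℝ) * (5 / 4) ^ (k - 1) ≤ δ' * 2 ^ m := by
  obtain ⟨g, hg, hlast, hsplit⟩ := S.exists_ownerRule ε' hd hε hδ
  have hmin := S.min_le_card_tailErrors g hg ε' hlast hsplit (k - 1) [] (by simp; omega)
  have herr : (#(S.tailErrors g hg ε' []) : ℝ) ≤ δ' * 2 ^ m := by
    have h := hS (S.toOwner g hg)
    have hcard : (Fintype.card (Fin m → Bool) : ℝ) = 2 ^ m := by simp
    rw [pr, hcard, div_le_iff₀ (by positivity)] at h
    refine le_of_eq_of_le ?_ h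
    congr 2
    ext Z
    simp [tailErrors, seeds_nil]
  rw [seeds_nil, card_univ, Fintype.card_fun, Fintype.card_bool, Fintype.card_fin] at hmin
  push_cast at hmin
  rcases min_cases ((2 : ℝ) ^ m / 5) (⌊δ * 2 ^ n⌋₊ * (5 / 4) ^ (k - 1)) with ⟨h, -⟩ | ⟨h, -⟩
  · have : (0 : ℝ) < 2 ^ m := by positivity
    nlinarith
  · linarith

end Steward

theorem sub_two_add_mul_logb_sub_logb_le {n k m : ℕ} {δ δ' : ℝ} (hk : 0 < k) (hδ : 0 < δ)
    (hδ' : 0 < δ') (h : δ * 2 ^ n * (5 / 4) ^ (k - 1) ≤ 2 ^ 2 * (δ' * 2 ^ m)) :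
    ((n : ℝ) - 2) + ((k : ℝ) - 1) * Real.logb 2 (5 / 4) - Real.logb 2 (δ' / δ) ≤ m := by
  have hlog := Real.logb_le_logb_of_le (b := 2) one_lt_two (by positivity) h
  rw [Real.logb_mul (by positivity) (by positivity), Real.logb_mul hδ.ne' (by positivity),
    Real.logb_mul (by positivity) (by positivity), Real.logb_mul hδ'.ne' (by positivity)] at hlog
  simp only [Real.logb_pow, Real.logb_self_eq_one one_lt_two] at hlog
  rw [Nat.cast_pred hk] at hlog
  rw [Real.logb_div hδ'.ne' hδ.ne']
  linarith

theorem steward_lower_bound_general (n k d m : ℕ) (hk : 0 < k) (hd : 0 < d)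
    (ε ε' δ δ' : ℝ) (hε : 0 < ε)
    (hδ : ((2 : ℝ) ^ n)⁻¹ ≤ δ) (hδ'1 : δ' < 0.2)
    (S : Steward n k d m) (hS : IsSteward n k d m ε δ ε' δ' S) :
    ((n : ℝ) - 2) + ((k : ℝ) - 1) * Real.logb 2 (5 / 4) - Real.logb 2 (δ' / δ) ≤ m := by
  have hδ1 : 1 ≤ δ * 2 ^ n := (inv_le_iff_one_le_mul₀ (by positivity)).1 hδ
  have hcount :=
    S.floor_mul_pow_le_of_isSteward ε' hk hd hε hδ1 (by norm_num at hδ'1 ⊢; linarith) hS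
  have hs : (1 : ℝ) ≤ ⌊δ * 2 ^ n⌋₊ := by exact_mod_cast Nat.one_le_floor_iff _ |>.2 hδ1
  have hpow : (0 : ℝ) < (5 / 4) ^ (k - 1) := by positivity
  have hδ' : 0 < δ' :=
    pos_of_mul_pos_left ((mul_pos (by linarith) hpow).trans_le hcount) (by positivity)
  refine sub_two_add_mul_logb_sub_logb_le hk ((inv_pos.2 (by positivity)).trans_le hδ) hδ' ?_
  have hfloor := Nat.lt_floor_add_one (δ * 2 ^ n)
  calc δ * 2 ^ n * (5 / 4) ^ (k - 1) ≤ 2 * ⌊δ * 2 ^ n⌋₊ * (5 / 4) ^ (k - 1) :=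
        mul_le_mul_of_nonneg_right (by linarith) hpow.le
    _ ≤ 2 ^ 2 * (δ' * 2 ^ m) := by nlinarith

/-- lower bound for one-query stewards: if `δ ≥ 2^{−n}` and
`0 < δ′ < 0.2`, then any one-query `(ε′,δ′)`-steward for `k` adaptively chosen
`(ε,δ)`-concentrated functions `{0,1}^n → ℝ^d` has randomness complexity
`m ≥ (n − 2) + (k−1)·log₂(5/4) − log₂(δ′/δ)`. -/
theorem steward_lower_bound (n k d m : ℕ) (hn : 0 < n) (hk : 0 < k) (hd : 0 < d)
    (ε ε' δ δ' : ℝ) (hε : 0 < ε) (hε' : 0 < ε')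
    (hδ : ((2 : ℝ) ^ n)⁻¹ ≤ δ) (hδ'0 : 0 < δ') (hδ'1 : δ' < 0.2)
    (S : Steward n k d m) (hS : IsSteward n k d m ε δ ε' δ' S) :
    ((n : ℝ) - 2) + ((k : ℝ) - 1) * Real.logb 2 (5 / 4) - Real.logb 2 (δ' / δ) ≤ m :=
  steward_lower_bound_general n k d m hk hd ε ε' δ δ' hε hδ hδ'1 S hS
end

section
/- Let n, k, d₀, d₁ be positive integers, d = d₀·d₁, ε > 0, and 0 < δ < 1/2. Let Σ = {1,…,d₀+1}^{d₁} ∪ {⊥}. For every deterministic owner O (for k rounds of (ε,δ)-concentrated functions {0,1}^n → ℝ^d) there exists a (k,n,Σ) block decision tree T_O such that: (1) for every w ∈ Σ^{<k}, Pr_{X uniform on {0,1}^n}[v_w(X) = ⊥] ≤ δ; and (2) for all X_1,…,X_k ∈ {0,1}^n, if no coordinate of T_O(X_1,…,X_k) ∈ Σ^k equals ⊥, then in the interaction O ↔ S₀(X_1,…,X_k) one has max_{1≤i≤k} ‖Y_i − μ_i‖_∞ ≤ (3d₀+5)ε. -/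
open Classical

/-- Rounds `x` to the midpoint of the half-open interval `[L·m, L·(m+1))` containing it. -/
noncomputable def roundMid (L x : ℝ) : ℝ := L * ⌊x / L⌋ + L / 2

/-- The least `Δ ∈ {1,…,d₀+1}` such that, for every coordinate `j` in block `t`
(the blocks being the consecutive runs of `d₀` coordinates), the interval
`[W_j + (2Δ−1)ε, W_j + (2Δ+1)ε]` is contained in a single half-open interval
`[2ε(d₀+1)·m, 2ε(d₀+1)·(m+1))`. -/
noncomputable def shiftBlock (d d₀ : ℕ) (ε : ℝ) (W : Fin d → ℝ) (t : ℕ) : ℕ :=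
  sInf {Δ : ℕ | 1 ≤ Δ ∧ Δ ≤ d₀ + 1 ∧ ∀ j : Fin d, (j : ℕ) / d₀ = t →
    ∃ m : ℤ, 2 * ε * (d₀ + 1) * m ≤ W j + (2 * Δ - 1) * ε ∧
      W j + (2 * Δ + 1) * ε < 2 * ε * (d₀ + 1) * (m + 1)}

/-- The interaction `O ↔ S₀(X_1,…,X_k)` with the (generalized) shifting-and-rounding
steward `S₀` (block size `d₀`): the list of pairs `(Y_i, μ_i)`. In round `i`,
`S₀` queries `f_i` at the fresh random point `X_i`, shifts each block of `d₀`
coordinates of `W_i = f_i(X_i)` by `2·Δ_{it}·ε`, and rounds each coordinate to the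
midpoint of the length-`2ε(d₀+1)` half-open interval containing it. -/
noncomputable def runS0 (n d d₀ k : ℕ) (ε δ : ℝ) (O : Owner n k d ε δ)
    (Xs : List (Fin n → Bool)) : List ((Fin d → ℝ) × (Fin d → ℝ)) :=
  Xs.foldl (fun h X =>
    let fμ := O.act (h.map Prod.fst)
    let W := fμ.1 X
    h ++ [(fun j : Fin d =>
      roundMid (2 * ε * (d₀ + 1)) (W j + 2 * (shiftBlock d d₀ ε W ((j : ℕ) / d₀)) * ε),
      fμ.2)]) []

/-- The output string of a `(k,n,Σ)` block decision tree, given as the family of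
node functions `v_w` indexed by strings `w`, on input the list `Xs` of blocks:
`σ_i = v_{(σ_1,…,σ_{i-1})}(X_i)`. -/
def treeOutList {A I : Type*} (v : List A → I → A) (Xs : List I) : List A :=
  Xs.foldl (fun w X => w ++ [v w X]) []

/-- `Gen` is a `γ`-PRG for `(k,n,A)` block decision trees: for every tree, the total
variation distance between the output distribution on pseudorandom inputs and on
truly random inputs is at most `γ`. -/
def IsBDTPRG (n k s : ℕ) (A : Type*) [Fintype A] (γ : ℝ)
    (Gen : (Fin s → Bool) → Fin k → (Fin n → Bool)) : Prop :=
  ∀ v : List A → (Fin n → Bool) → A,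
    (1 / 2) * ∑ σ : Fin k → A,
      |pr (fun x : Fin s → Bool => treeOutList v (List.ofFn (Gen x)) = List.ofFn σ)
        - pr (fun X : Fin k → (Fin n → Bool) => treeOutList v (List.ofFn X) = List.ofFn σ)|
      ≤ γ

/-! The node at `w` replays the owner on the responses reconstructed from the symbols in `w`,
with `μ_i + 2Δε` rounded in place of the unknown `W_i + 2Δε`. It outputs `⊥` when `f_i(X)` is
`ε`-far from `μ_i`, an event of probability at most `δ` by concentration, and otherwise the
shifts chosen by `S₀`. The chosen shift puts the whole `ε`-window around `W_i + 2Δε` inside one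
rounding cell, so `μ_i + 2Δε` rounds to the same `Y_i`: along a path without `⊥` the replay is
exact, and `|Y_i - μ_i| ≤ ε(d₀+1) + 2Δε + ε`. A good shift exists by pigeonhole: each of the
`d₀` coordinates of a block rules out at most one of the `d₀ + 1` shifts. -/

/-- The condition of `shiftBlock`: `[x + (2Δ-1)ε, x + (2Δ+1)ε]` lies in one rounding cell. -/
def FitsCell (d₀ : ℕ) (ε x : ℝ) (Δ : ℕ) : Prop :=
  ∃ m : ℤ, 2 * ε * (d₀ + 1) * m ≤ x + (2 * Δ - 1) * ε ∧
    x + (2 * Δ + 1) * ε < 2 * ε * (d₀ + 1) * (m + 1)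

lemma shiftBlock_eq (d d₀ : ℕ) (ε : ℝ) (W : Fin d → ℝ) (t : ℕ) :
    shiftBlock d d₀ ε W t =
      sInf {Δ : ℕ | 1 ≤ Δ ∧ Δ ≤ d₀ + 1 ∧
        ∀ j : Fin d, (j : ℕ) / d₀ = t → FitsCell d₀ ε (W j) Δ} :=
  rfl

section Rounding

variable {L x : ℝ}

lemma exists_int_mul_le_lt (hL : 0 < L) (x : ℝ) : ∃ m : ℤ, L * m ≤ x ∧ x < L * (m + 1) := by
  obtain ⟨m, ⟨h₁, h₂⟩, -⟩ := existsUnique_zsmul_near_of_pos hL x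
  refine ⟨m, ?_, ?_⟩
  · simpa [zsmul_eq_mul, mul_comm] using h₁
  · simpa [zsmul_eq_mul, mul_comm] using h₂

lemma roundMid_eq_of_le_of_lt {m : ℤ} (hL : 0 < L) (h₁ : L * m ≤ x) (h₂ : x < L * (m + 1)) :
    roundMid L x = L * m + L / 2 := by
  have : ⌊x / L⌋ = m := by
    rw [Int.floor_eq_iff, le_div_iff₀ hL, div_lt_iff₀ hL]
    constructor <;> linarith
  rw [roundMid, this]

lemma abs_roundMid_sub_le (hL : 0 < L) (x : ℝ) : |roundMid L x - x| ≤ L / 2 := by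
  obtain ⟨m, h₁, h₂⟩ := exists_int_mul_le_lt hL x
  rw [roundMid_eq_of_le_of_lt hL h₁ h₂, abs_le]
  constructor <;> linarith

end Rounding

section FitsCell

variable {d₀ : ℕ} {ε x : ℝ}

lemma exists_grid_point_of_not_fitsCell (hε : 0 < ε) {Δ : ℕ} (h : ¬ FitsCell d₀ ε x Δ) :
    ∃ m : ℤ, x + (2 * Δ - 1) * ε < 2 * ε * (d₀ + 1) * m ∧
      2 * ε * (d₀ + 1) * m ≤ x + (2 * Δ + 1) * ε := by
  obtain ⟨m, h₁, h₂⟩ := exists_int_mul_le_lt (by positivity : 0 < 2 * ε * (d₀ + 1))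
    (x + (2 * Δ - 1) * ε)
  refine ⟨m + 1, by push_cast; linarith, ?_⟩
  push_cast
  by_contra! h'
  exact h ⟨m, h₁, by linarith⟩

/-- The windows `(x + (2Δ-1)ε, x + (2Δ+1)ε]`, `Δ = 1, …, d₀+1`, tile an interval of length
`2ε(d₀+1)`, so at most one of them contains a grid point. -/
lemma not_lt_of_not_fitsCell (hε : 0 < ε) {Δ₁ Δ₂ : ℕ} (h₁ : 1 ≤ Δ₁) (h₂ : Δ₂ ≤ d₀ + 1)
    (hΔ₁ : ¬ FitsCell d₀ ε x Δ₁) (hΔ₂ : ¬ FitsCell d₀ ε x Δ₂) : ¬ Δ₁ < Δ₂ := by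
  intro hlt
  obtain ⟨m₁, hm₁, hm₁'⟩ := exists_grid_point_of_not_fitsCell hε hΔ₁
  obtain ⟨m₂, hm₂, hm₂'⟩ := exists_grid_point_of_not_fitsCell hε hΔ₂
  have hlt' : (Δ₁ : ℝ) + 1 ≤ Δ₂ := by exact_mod_cast hlt
  have hspread : (Δ₂ : ℝ) ≤ Δ₁ + d₀ := by exact_mod_cast (by omega : Δ₂ ≤ Δ₁ + d₀)
  have hm : m₁ + 1 ≤ m₂ := by
    have : (m₁ : ℝ) < m₂ :=
      lt_of_mul_lt_mul_left (by nlinarith) (by positivity : (0 : ℝ) ≤ 2 * ε * (d₀ + 1))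
    exact_mod_cast this
  have hm' : ((m₁ : ℝ) + 1) ≤ m₂ := by exact_mod_cast hm
  nlinarith [mul_le_mul_of_nonneg_left hm' (by positivity : (0 : ℝ) ≤ 2 * ε * (d₀ + 1)),
    mul_le_mul_of_nonneg_right hspread hε.le]

lemma eq_of_not_fitsCell (hε : 0 < ε) {Δ₁ Δ₂ : ℕ} (h₁ : Δ₁ ∈ Finset.Icc 1 (d₀ + 1))
    (h₂ : Δ₂ ∈ Finset.Icc 1 (d₀ + 1)) (hΔ₁ : ¬ FitsCell d₀ ε x Δ₁)
    (hΔ₂ : ¬ FitsCell d₀ ε x Δ₂) : Δ₁ = Δ₂ := by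
  rw [Finset.mem_Icc] at h₁ h₂
  exact le_antisymm (not_lt.mp (not_lt_of_not_fitsCell hε h₂.1 h₁.2 hΔ₂ hΔ₁))
    (not_lt.mp (not_lt_of_not_fitsCell hε h₁.1 h₂.2 hΔ₁ hΔ₂))

lemma exists_fitsCell_of_card_le {ι : Type*} (hε : 0 < ε) (s : Finset ι) (x : ι → ℝ)
    (hs : s.card ≤ d₀) :
    ∃ Δ, 1 ≤ Δ ∧ Δ ≤ d₀ + 1 ∧ ∀ i ∈ s, FitsCell d₀ ε (x i) Δ := by
  by_contra! hbad
  have hcover : Finset.Icc 1 (d₀ + 1) ⊆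
      s.biUnion fun i => (Finset.Icc 1 (d₀ + 1)).filter fun Δ => ¬ FitsCell d₀ ε (x i) Δ := by
    intro Δ hΔ
    obtain ⟨i, hi, hfail⟩ := hbad Δ (Finset.mem_Icc.mp hΔ).1 (Finset.mem_Icc.mp hΔ).2
    exact Finset.mem_biUnion.mpr ⟨i, hi, Finset.mem_filter.mpr ⟨hΔ, hfail⟩⟩
  have hle_one : ∀ i ∈ s,
      ((Finset.Icc 1 (d₀ + 1)).filter fun Δ => ¬ FitsCell d₀ ε (x i) Δ).card ≤ 1 := by
    intro i _
    refine Finset.card_le_one.mpr fun Δ₁ h₁ Δ₂ h₂ => ?_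
    rw [Finset.mem_filter] at h₁ h₂
    exact eq_of_not_fitsCell hε h₁.1 h₂.1 h₁.2 h₂.2
  have := (Finset.card_le_card hcover).trans (Finset.card_biUnion_le_card_mul _ _ 1 hle_one)
  simp only [Nat.card_Icc, mul_one] at this
  omega

end FitsCell

lemma card_filter_div_eq_le {d d₀ : ℕ} (hd₀ : 0 < d₀) (t : ℕ) :
    (Finset.univ.filter fun j : Fin d => (j : ℕ) / d₀ = t).card ≤ d₀ := by
  calc (Finset.univ.filter fun j : Fin d => (j : ℕ) / d₀ = t).card
      ≤ (Finset.range d₀).card := by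
        refine Finset.card_le_card_of_injOn (fun j => (j : ℕ) % d₀)
          (fun j _ => Finset.mem_range.mpr (Nat.mod_lt _ hd₀)) fun j₁ h₁ j₂ h₂ hmod => ?_
        simp only [Finset.mem_coe, Finset.mem_filter, Finset.mem_univ, true_and] at h₁ h₂
        have e₁ := Nat.div_add_mod (j₁ : ℕ) d₀
        have e₂ := Nat.div_add_mod (j₂ : ℕ) d₀
        rw [h₁] at e₁
        rw [h₂] at e₂
        exact Fin.ext (by simp only at hmod; omega)
    _ = d₀ := Finset.card_range d₀

lemma shiftBlock_spec {d d₀ : ℕ} (hd₀ : 0 < d₀) {ε : ℝ} (hε : 0 < ε) (W : Fin d → ℝ) (t : ℕ) :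
    1 ≤ shiftBlock d d₀ ε W t ∧ shiftBlock d d₀ ε W t ≤ d₀ + 1 ∧
      ∀ j : Fin d, (j : ℕ) / d₀ = t → FitsCell d₀ ε (W j) (shiftBlock d d₀ ε W t) := by
  obtain ⟨Δ, h₁, h₂, hfit⟩ :=
    exists_fitsCell_of_card_le hε _ W (card_filter_div_eq_le (d := d) hd₀ t)
  rw [shiftBlock_eq]
  exact Nat.sInf_mem (s := {Δ | 1 ≤ Δ ∧ Δ ≤ d₀ + 1 ∧ ∀ j : Fin d, (j : ℕ) / d₀ = t →
    FitsCell d₀ ε (W j) Δ}) ⟨Δ, h₁, h₂, fun j hj => hfit j (by simp [hj])⟩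

noncomputable def shiftRound (d d₀ : ℕ) (ε : ℝ) (W : Fin d → ℝ) : Fin d → ℝ := fun j =>
  roundMid (2 * ε * (d₀ + 1)) (W j + 2 * (shiftBlock d d₀ ε W ((j : ℕ) / d₀)) * ε)

section ShiftRound

variable {d₀ Δ : ℕ} {ε x y : ℝ}

lemma roundMid_shift_eq_of_fitsCell (hε : 0 < ε) (hfit : FitsCell d₀ ε x Δ)
    (hxy : |x - y| ≤ ε) :
    roundMid (2 * ε * (d₀ + 1)) (x + 2 * Δ * ε) =
      roundMid (2 * ε * (d₀ + 1)) (y + 2 * Δ * ε) := by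
  obtain ⟨m, h₁, h₂⟩ := hfit
  have hL : 0 < 2 * ε * ((d₀ : ℝ) + 1) := by positivity
  obtain ⟨hxy₁, hxy₂⟩ := abs_le.mp hxy
  rw [roundMid_eq_of_le_of_lt hL (by linarith) (by linarith),
    roundMid_eq_of_le_of_lt hL (by linarith) (by linarith)]

lemma abs_roundMid_shift_sub_le (hε : 0 < ε) (hΔ : Δ ≤ d₀ + 1) (hxy : |x - y| ≤ ε) :
    |roundMid (2 * ε * (d₀ + 1)) (x + 2 * Δ * ε) - y| ≤ (3 * d₀ + 5) * ε := by
  have hround := abs_le.mp (abs_roundMid_sub_le (by positivity : 0 < 2 * ε * ((d₀ : ℝ) + 1))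
    (x + 2 * Δ * ε))
  have hΔε : (Δ : ℝ) * ε ≤ (d₀ + 1) * ε :=
    mul_le_mul_of_nonneg_right (by exact_mod_cast hΔ) hε.le
  have hΔ₀ : 0 ≤ (Δ : ℝ) * ε := by positivity
  obtain ⟨hxy₁, hxy₂⟩ := abs_le.mp hxy
  rw [abs_le]
  constructor <;> nlinarith [hround.1, hround.2]

end ShiftRound

lemma treeOutList_append_singleton {A I : Type*} (v : List A → I → A) (Xs : List I) (X : I) :
    treeOutList v (Xs ++ [X]) = treeOutList v Xs ++ [v (treeOutList v Xs) X] := by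
  rw [treeOutList, List.foldl_append]
  rfl

section CertificationTree

variable {n k d : ℕ} {ε δ : ℝ}

lemma runS0_append_singleton (d₀ : ℕ) (O : Owner n k d ε δ) (Xs : List (Fin n → Bool))
    (X : Fin n → Bool) :
    runS0 n d d₀ k ε δ O (Xs ++ [X]) = runS0 n d d₀ k ε δ O Xs ++
      [(shiftRound d d₀ ε ((O.act ((runS0 n d d₀ k ε δ O Xs).map Prod.fst)).1 X),
        (O.act ((runS0 n d d₀ k ε δ O Xs).map Prod.fst)).2)] := by
  rw [runS0, List.foldl_append]
  rfl

variable {d₀ d₁ : ℕ}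

/-- `Σ` is coded as `Option (Fin d₁ → Fin (d₀ + 1))`: `none` is `⊥`, and `some s` stands for the
block shifts `Δ_t = s t + 1`. The junk values at `⊥` and at `t ≥ d₁` are never used. -/
def decodeShift : Option (Fin d₁ → Fin (d₀ + 1)) → ℕ → ℕ
  | some s, t => if h : t < d₁ then s ⟨t, h⟩ + 1 else 0
  | none, _ => 0

noncomputable def encodeShifts (d₀ d₁ : ℕ) (ε : ℝ) (W : Fin d → ℝ) : Fin d₁ → Fin (d₀ + 1) :=
  fun t => Fin.ofNat (d₀ + 1) (shiftBlock d d₀ ε W t - 1)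

lemma decodeShift_encodeShifts (hd₀ : 0 < d₀) (hd : d = d₀ * d₁) (hε : 0 < ε)
    (W : Fin d → ℝ) (j : Fin d) :
    decodeShift (some (encodeShifts d₀ d₁ ε W)) ((j : ℕ) / d₀) =
      shiftBlock d d₀ ε W ((j : ℕ) / d₀) := by
  have hblock : (j : ℕ) / d₀ < d₁ :=
    (Nat.div_lt_iff_lt_mul hd₀).mpr (by rw [← Nat.mul_comm, ← hd]; exact j.2)
  obtain ⟨h₁, h₂, -⟩ := shiftBlock_spec hd₀ hε W ((j : ℕ) / d₀)
  rw [decodeShift, dif_pos hblock, encodeShifts, Fin.val_ofNat]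
  dsimp only
  rw [Nat.mod_eq_of_lt (by omega)]
  omega

variable (O : Owner n k d ε δ)

noncomputable def replay (w : List (Option (Fin d₁ → Fin (d₀ + 1)))) : List (Fin d → ℝ) :=
  w.foldl (fun ys σ => ys ++ [fun j => roundMid (2 * ε * (d₀ + 1))
    ((O.act ys).2 j + 2 * decodeShift σ ((j : ℕ) / d₀) * ε)]) []

noncomputable def certNode (d₀ d₁ : ℕ) (w : List (Option (Fin d₁ → Fin (d₀ + 1))))
    (X : Fin n → Bool) : Option (Fin d₁ → Fin (d₀ + 1)) :=
  if ∃ j, |(O.act (replay O w)).1 X j - (O.act (replay O w)).2 j| > ε then none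
  else some (encodeShifts d₀ d₁ ε ((O.act (replay O w)).1 X))

lemma replay_append_singleton (w : List (Option (Fin d₁ → Fin (d₀ + 1))))
    (σ : Option (Fin d₁ → Fin (d₀ + 1))) :
    replay O (w ++ [σ]) = replay O w ++ [fun j => roundMid (2 * ε * (d₀ + 1))
      ((O.act (replay O w)).2 j + 2 * decodeShift σ ((j : ℕ) / d₀) * ε)] := by
  rw [replay, List.foldl_append]
  rfl

lemma length_replay (w : List (Option (Fin d₁ → Fin (d₀ + 1)))) :
    (replay O w).length = w.length := by
  induction w using List.reverseRecOn with
  | nil => rfl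
  | append_singleton w σ ih => simp [replay_append_singleton, ih]

lemma certNode_eq_none_iff (w : List (Option (Fin d₁ → Fin (d₀ + 1)))) (X : Fin n → Bool) :
    certNode O d₀ d₁ w X = none ↔
      ∃ j, |(O.act (replay O w)).1 X j - (O.act (replay O w)).2 j| > ε := by
  unfold certNode
  split_ifs with h <;> simp [h]

lemma certNode_eq_some_of_ne_none (w : List (Option (Fin d₁ → Fin (d₀ + 1)))) (X : Fin n → Bool)
    (h : certNode O d₀ d₁ w X ≠ none) :
    certNode O d₀ d₁ w X = some (encodeShifts d₀ d₁ ε ((O.act (replay O w)).1 X)) ∧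
      ∀ j, |(O.act (replay O w)).1 X j - (O.act (replay O w)).2 j| ≤ ε := by
  have hclose := not_exists.mp (mt (certNode_eq_none_iff O w X).mpr h)
  exact ⟨if_neg (not_exists.mpr hclose), fun j => not_lt.mp (hclose j)⟩

lemma replay_treeOutList_certNode (hd₀ : 0 < d₀) (hd : d = d₀ * d₁) (hε : 0 < ε)
    (Xs : List (Fin n → Bool))
    (hXs : ∀ σ ∈ treeOutList (certNode O d₀ d₁) Xs, σ ≠ none) :
    replay O (treeOutList (certNode O d₀ d₁) Xs) = (runS0 n d d₀ k ε δ O Xs).map Prod.fst := by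
  induction Xs using List.reverseRecOn with
  | nil => rfl
  | append_singleton Xs X ih =>
    rw [treeOutList_append_singleton, List.forall_mem_append, List.forall_mem_singleton] at hXs
    have hhist := ih hXs.1
    obtain ⟨hsome, hclose⟩ := certNode_eq_some_of_ne_none O _ X hXs.2
    rw [hhist] at hsome hclose
    rw [treeOutList_append_singleton, hsome, replay_append_singleton, hhist,
      runS0_append_singleton, List.map_append]
    congr 2
    funext j
    rw [decodeShift_encodeShifts hd₀ hd hε]
    unfold shiftRound
    exact (roundMid_shift_eq_of_fitsCell hε ((shiftBlock_spec hd₀ hε _ _).2.2 j rfl)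
      (hclose j)).symm

lemma abs_runS0_sub_le (hd₀ : 0 < d₀) (hd : d = d₀ * d₁) (hε : 0 < ε)
    (Xs : List (Fin n → Bool))
    (hXs : ∀ σ ∈ treeOutList (certNode O d₀ d₁) Xs, σ ≠ none) :
    ∀ p ∈ runS0 n d d₀ k ε δ O Xs, ∀ j, |p.1 j - p.2 j| ≤ (3 * (d₀ : ℝ) + 5) * ε := by
  induction Xs using List.reverseRecOn with
  | nil => simp [runS0]
  | append_singleton Xs X ih =>
    rw [treeOutList_append_singleton, List.forall_mem_append, List.forall_mem_singleton] at hXs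
    have hclose := (certNode_eq_some_of_ne_none O _ X hXs.2).2
    rw [replay_treeOutList_certNode O hd₀ hd hε Xs hXs.1] at hclose
    intro p hp j
    rw [runS0_append_singleton, List.mem_append, List.mem_singleton] at hp
    rcases hp with hp | rfl
    · exact ih hXs.1 p hp j
    · exact abs_roundMid_shift_sub_le hε (shiftBlock_spec hd₀ hε _ _).2.1 (hclose j)

end CertificationTree

theorem generalized_certification_tree_general (n k d₀ d₁ d : ℕ)
    (hd₀ : 0 < d₀) (hd : d = d₀ * d₁)
    (ε δ : ℝ) (hε : 0 < ε)
    (O : Owner n k d ε δ) :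
    ∃ v : List (Option (Fin d₁ → Fin (d₀ + 1))) → (Fin n → Bool) →
        Option (Fin d₁ → Fin (d₀ + 1)),
      (∀ w : List (Option (Fin d₁ → Fin (d₀ + 1))), w.length < k →
        pr (fun X : Fin n → Bool => v w X = none) ≤ δ) ∧
      (∀ Xs : List (Fin n → Bool), Xs.length = k →
        (∀ σ ∈ treeOutList v Xs, σ ≠ none) →
        ∀ p ∈ runS0 n d d₀ k ε δ O Xs, ∀ j : Fin d,
          |p.1 j - p.2 j| ≤ (3 * (d₀ : ℝ) + 5) * ε) := by
  refine ⟨certNode O d₀ d₁, fun w hw => ?_, fun Xs _ hXs => abs_runS0_sub_le O hd₀ hd hε Xs hXs⟩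
  simp_rw [certNode_eq_none_iff]
  exact O.conc _ (by rwa [length_replay])

/-- generalized certification tree: let `d = d₀·d₁` and
`Σ = {1,…,d₀+1}^{d₁} ∪ {⊥}` (coded as `Option (Fin d₁ → Fin (d₀+1))` with `none = ⊥`).
For every deterministic owner `O` there is a `(k,n,Σ)` block decision tree certifying
correctness of `O ↔ S₀` (the generalized shifting-and-rounding steward with block size
`d₀`): (1) at every node, the probability of moving to the `⊥`-child is at most `δ`;
(2) whenever the computation path contains no `⊥`, the interaction `O ↔ S₀(X_1,…,X_k)`
satisfies `max_i ‖Y_i − μ_i‖_∞ ≤ (3d₀+5)ε`. -/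
theorem generalized_certification_tree (n k d₀ d₁ d : ℕ)
    (hn : 0 < n) (hk : 0 < k) (hd₀ : 0 < d₀) (hd₁ : 0 < d₁) (hd : d = d₀ * d₁)
    (ε δ : ℝ) (hε : 0 < ε) (hδ0 : 0 < δ) (hδ : δ < 1 / 2)
    (O : Owner n k d ε δ) :
    ∃ v : List (Option (Fin d₁ → Fin (d₀ + 1))) → (Fin n → Bool) →
        Option (Fin d₁ → Fin (d₀ + 1)),
      (∀ w : List (Option (Fin d₁ → Fin (d₀ + 1))), w.length < k →
        pr (fun X : Fin n → Bool => v w X = none) ≤ δ) ∧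
      (∀ Xs : List (Fin n → Bool), Xs.length = k →
        (∀ σ ∈ treeOutList v Xs, σ ≠ none) →
        ∀ p ∈ runS0 n d d₀ k ε δ O Xs, ∀ j : Fin d,
          |p.1 j - p.2 j| ≤ (3 * (d₀ : ℝ) + 5) * ε) :=
  generalized_certification_tree_general n k d₀ d₁ d hd₀ hd ε δ hε O
end

section
/- There is an absolute constant C > 0 such that for all positive integers n, k, d and all reals ε > 0, δ > 0, 0 < γ ≤ 1, there exists a one-query (ε′, kδ+γ)-steward for k adaptively chosen (ε,δ)-concentrated functions f : {0,1}^n → ℝ^d with error ε′ ≤ C·k·d·ε/γ and randomness complexity m ≤ n + C·k·(log₂ k + log₂ d + log₂(1/γ) + 1). -/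
open Classical

/-!
The steward spends `n` random bits on a single query point `x`, used in every round, and `b` bits
per round on a shift `tᵢ < T = 2ᵇ`. It answers round `i` by rounding each coordinate of
`Wᵢ = fᵢ(x)` down to the grid `2ε(tᵢ + Tℤ)`, so its error is below `2εT`. Compare with the ideal
run in which the steward rounds the mean `μᵢ` itself: there the `i`-th function and mean depend
only on `t₁, …, tᵢ₋₁`. Unless `x` is `ε`-far from the mean of one of the `k` ideal functions
(probability at most `kδ` by concentration, since the ideal run does not depend on `x`), or some
`μᵢ` has a coordinate within `ε` of the grid selected by `tᵢ` (probability at most `2d/T`, since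
`tᵢ` is independent of `μᵢ` and each coordinate excludes at most two shifts), rounding `Wᵢ` and
`μᵢ` give the same answer and the real run coincides with the ideal one. Taking
`T ≈ 2dk/γ` gives the bounds.
-/

section UniformProbability

variable {α β : Type*} [Fintype α] [Fintype β]

lemma pr_eq_card_div (P : α → Prop) [DecidablePred P] :
    pr P = (Finset.univ.filter P).card / Fintype.card α := by
  unfold pr
  congr

lemma pr_mono {P Q : α → Prop} (h : ∀ a, P a → Q a) : pr P ≤ pr Q := by
  rw [pr_eq_card_div, pr_eq_card_div]
  gcongr
  exact h _

lemma pr_or_le (P Q : α → Prop) : pr (fun a => P a ∨ Q a) ≤ pr P + pr Q := by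
  rw [pr_eq_card_div, pr_eq_card_div P, pr_eq_card_div Q, ← add_div, Finset.filter_or]
  gcongr
  exact_mod_cast Finset.card_union_le _ _

lemma pr_exists_le_sum {ι : Type*} [Fintype ι] (P : ι → α → Prop) :
    pr (fun a => ∃ i, P i a) ≤ ∑ i, pr (P i) := by
  simp only [pr_eq_card_div]
  rw [← Finset.sum_div]
  gcongr
  have hsub : Finset.univ.filter (fun a => ∃ i, P i a) ⊆
      Finset.univ.biUnion fun i => Finset.univ.filter (P i) := by
    intro a
    simp
  exact_mod_cast (Finset.card_le_card hsub).trans Finset.card_biUnion_le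

lemma pr_exists_le_card_mul {ι : Type*} [Fintype ι] {P : ι → α → Prop} {c : ℝ}
    (h : ∀ i, pr (P i) ≤ c) : pr (fun a => ∃ i, P i a) ≤ Fintype.card ι * c := by
  refine (pr_exists_le_sum P).trans ?_
  simpa using Finset.sum_le_sum fun i (_ : i ∈ Finset.univ) => h i

lemma pr_comp_equiv (e : α ≃ β) (P : β → Prop) : pr (fun a => P (e a)) = pr P := by
  rw [pr_eq_card_div, pr_eq_card_div, Fintype.card_congr e]
  congr 2
  exact Finset.card_equiv e (by simp)

lemma pr_prod_eq_sum_div (P : α → β → Prop) :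
    pr (fun p : α × β => P p.1 p.2) = (∑ b, pr (P · b)) / Fintype.card β := by
  simp only [pr_eq_card_div]
  rw [Finset.card_filter, Fintype.sum_prod_type_right, Fintype.card_prod, ← Finset.sum_div,
    div_div]
  simp only [Finset.card_filter]
  push_cast
  ring

lemma pr_prod_le [Nonempty β] {P : α → β → Prop} {c : ℝ} (h : ∀ b, pr (P · b) ≤ c) :
    pr (fun p : α × β => P p.1 p.2) ≤ c := by
  rw [pr_prod_eq_sum_div, div_le_iff₀ (by exact_mod_cast Fintype.card_pos)]
  simpa [mul_comm] using Finset.sum_le_sum fun b (_ : b ∈ Finset.univ) => h b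

lemma pr_comp_snd [Nonempty α] (Q : β → Prop) : pr (fun p : α × β => Q p.2) = pr Q := by
  have hα : (Fintype.card α : ℝ) ≠ 0 := by exact_mod_cast Fintype.card_ne_zero
  have hfilter : Finset.univ.filter (fun p : α × β => Q p.2) =
      Finset.univ ×ˢ Finset.univ.filter Q := by
    ext p
    simp
  rw [pr_eq_card_div, pr_eq_card_div, hfilter, Finset.card_product, Finset.card_univ,
    Fintype.card_prod]
  push_cast
  exact mul_div_mul_left _ _ hα

lemma pr_mem (s : Finset α) : pr (· ∈ s) = s.card / Fintype.card α := by
  rw [pr_eq_card_div]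
  congr 3
  ext a
  simp

lemma pr_apply_mem_le [DecidableEq α] [Nonempty β] (i : α) {B : (α → β) → Finset β}
    (hB : ∀ t v, B (Function.update t i v) = B t) {s : ℕ} (hs : ∀ t, (B t).card ≤ s) :
    pr (fun t : α → β => t i ∈ B t) ≤ s / Fintype.card β := by
  let e := (Equiv.funSplitAt i β).symm
  have he : ∀ v r, e (v, r) = Function.update (e (Classical.arbitrary β, r)) i v := by
    intro v r
    funext j
    by_cases hj : j = i
    · subst hj; simp [e]
    · simp [e, hj]
  rw [← pr_comp_equiv e]
  have key : ∀ p : β × ({j // j ≠ i} → β),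
      (e p i ∈ B (e p)) ↔ p.1 ∈ B (e (Classical.arbitrary β, p.2)) := by
    rintro ⟨v, r⟩
    rw [he v r, hB, Function.update_self]
  simp only [key]
  refine pr_prod_le (P := fun v r => v ∈ B (e (Classical.arbitrary β, r))) fun r => ?_
  rw [pr_mem]
  gcongr
  exact hs _

end UniformProbability

section GridRounding

variable {ε : ℝ} {T v : ℕ}

lemma floor_div_eq_of_abs_sub_le {L ε u u' : ℝ} (hL : 0 < L) (hfar : ∀ m : ℤ, ε < |u - m * L|)
    (hu : |u' - u| ≤ ε) : ⌊u' / L⌋ = ⌊u / L⌋ := by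
  set q := ⌊u / L⌋
  have hq : q * L ≤ u := (le_div_iff₀ hL).1 (Int.floor_le _)
  have hq' : u < (q + 1) * L := (div_lt_iff₀ hL).1 (Int.lt_floor_add_one _)
  have hfar_q := hfar q
  have hfar_q' := hfar (q + 1)
  rw [abs_of_nonneg (by linarith)] at hfar_q
  rw [abs_of_neg (by push_cast; linarith)] at hfar_q'
  push_cast at hfar_q'
  obtain ⟨hu₁, hu₂⟩ := abs_le.1 hu
  rw [Int.floor_eq_iff, le_div_iff₀ hL, div_lt_iff₀ hL]
  constructor <;> linarith

lemma eq_floor_add_half_of_abs_sub_le {c : ℝ} {z : ℤ} (h : |c - z| ≤ 1 / 2) :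
    z = ⌊c + 1 / 2⌋ ∨ z = ⌊c + 1 / 2⌋ - 1 := by
  obtain ⟨h₁, h₂⟩ := abs_le.1 h
  have hz : z ≤ ⌊c + 1 / 2⌋ := Int.le_floor.2 (by linarith)
  have hz' : ⌊c + 1 / 2⌋ ≤ z + 1 := by
    have := Int.floor_le (c + 1 / 2)
    exact_mod_cast (by linarith : (⌊c + 1 / 2⌋ : ℝ) ≤ z + 1)
  omega

noncomputable def gridRound (ε : ℝ) (T v : ℕ) (w : ℝ) : ℝ :=
  2 * ε * T * ⌊(w - 2 * ε * v) / (2 * ε * T)⌋ + 2 * ε * v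

def FarFromGrid (ε : ℝ) (T v : ℕ) (μ : ℝ) : Prop :=
  ∀ m : ℤ, ε < |μ - 2 * ε * (v + m * T)|

lemma abs_gridRound_sub_lt (hε : 0 < ε) (hT : 0 < T) (w : ℝ) :
    |gridRound ε T v w - w| < 2 * ε * T := by
  have hL : 0 < 2 * ε * T := by positivity
  have h : gridRound ε T v w - w = -(2 * ε * T * Int.fract ((w - 2 * ε * v) / (2 * ε * T))) := by
    rw [← Int.self_sub_floor, gridRound]
    field_simp
    ring
  rw [h, abs_neg, abs_of_nonneg (mul_nonneg hL.le (Int.fract_nonneg _))]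
  exact mul_lt_of_lt_one_right hL (Int.fract_lt_one _)

lemma gridRound_eq_of_farFromGrid (hε : 0 < ε) (hT : 0 < T) {μ w : ℝ}
    (hμ : FarFromGrid ε T v μ) (hw : |w - μ| ≤ ε) : gridRound ε T v w = gridRound ε T v μ := by
  have hfar : ∀ m : ℤ, ε < |μ - 2 * ε * v - m * (2 * ε * T)| := fun m => by
    convert hμ m using 2
    ring
  rw [gridRound, gridRound,
    floor_div_eq_of_abs_sub_le (by positivity) hfar (by rwa [sub_sub_sub_cancel_right])]

lemma card_not_farFromGrid_le_two (hε : 0 < ε) (μ : ℝ) :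
    (Finset.univ.filter fun v : Fin T => ¬FarFromGrid ε T v μ).card ≤ 2 := by
  set F := ⌊μ / (2 * ε) + 1 / 2⌋
  have hmaps : Set.MapsTo (fun v : Fin T => ((v : ℕ) : ℤ))
      (Finset.univ.filter fun v : Fin T => ¬FarFromGrid ε T v μ)
      (({(F - 1) % T, F % T} : Finset ℤ) : Set ℤ) := by
    intro v hv
    simp only [FarFromGrid, Finset.coe_filter, Finset.mem_univ, true_and, Set.mem_ofPred_eq,
      not_forall, not_lt] at hv
    obtain ⟨m, hm⟩ := hv
    have h2ε : 0 < 2 * ε := by positivity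
    have hz : |μ / (2 * ε) - ((v + m * T : ℤ) : ℝ)| ≤ 1 / 2 := by
      have hscale : μ - 2 * ε * (v + m * T) = 2 * ε * (μ / (2 * ε) - ((v + m * T : ℤ) : ℝ)) := by
        push_cast
        field_simp
      rw [hscale, abs_mul, abs_of_pos h2ε] at hm
      nlinarith
    have hv : ((v : ℕ) : ℤ) = (v + m * T) % T := by
      rw [Int.add_mul_emod_self_right, Int.emod_eq_of_lt (by positivity) (by exact_mod_cast v.2)]
    show ((v : ℕ) : ℤ) ∈ (({(F - 1) % T, F % T} : Finset ℤ) : Set ℤ)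
    rw [Finset.mem_coe, hv]
    rcases eq_floor_add_half_of_abs_sub_le hz with h | h <;> simp [h, F]
  calc _ ≤ ({(F - 1) % T, F % T} : Finset ℤ).card :=
        Finset.card_le_card_of_injOn _ hmaps fun a _ b _ h => Fin.ext (Nat.cast_injective h)
    _ ≤ 2 := Finset.card_le_two

lemma card_exists_not_farFromGrid_le (hε : 0 < ε) {ι : Type*} [Fintype ι] (μ : ι → ℝ) :
    (Finset.univ.filter fun v : Fin T => ∃ j, ¬FarFromGrid ε T v (μ j)).card
      ≤ 2 * Fintype.card ι := by
  have hsub : (Finset.univ.filter fun v : Fin T => ∃ j, ¬FarFromGrid ε T v (μ j)) ⊆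
      Finset.univ.biUnion fun j =>
        Finset.univ.filter fun v : Fin T => ¬FarFromGrid ε T v (μ j) := by
    intro v
    simp
  calc _ ≤ ∑ j, (Finset.univ.filter fun v : Fin T => ¬FarFromGrid ε T v (μ j)).card :=
        (Finset.card_le_card hsub).trans Finset.card_biUnion_le
    _ ≤ ∑ _j : ι, 2 := Finset.sum_le_sum fun j _ => card_not_farFromGrid_le_two hε (μ j)
    _ = 2 * Fintype.card ι := by simp [mul_comm]

end GridRounding

def shiftAt {k T : ℕ} (t : Fin k → Fin T) (i : ℕ) : ℕ :=
  if h : i < k then t ⟨i, h⟩ else 0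

lemma shiftAt_congr {k T : ℕ} {t t' : Fin k → Fin T} {i : ℕ}
    (h : ∀ l : Fin k, (l : ℕ) ≤ i → t l = t' l) : shiftAt t i = shiftAt t' i := by
  unfold shiftAt
  split_ifs with hi
  · rw [h ⟨i, hi⟩ le_rfl]
  · rfl

noncomputable def roundingSteward (ε : ℝ) {n k d m T : ℕ}
    (e : (Fin m → Bool) ≃ (Fin n → Bool) × (Fin k → Fin T)) : Steward n k d m where
  q Z _ := (e Z).1
  r Z ws w j := gridRound ε T (shiftAt (e Z).2 ws.length) (w j)

lemma length_run {n k d m : ℕ} {ε δ : ℝ} (O : Owner n k d ε δ) (S : Steward n k d m)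
    (Z : Fin m → Bool) (i : ℕ) : (run O S Z i).length = i := by
  induction i with
  | zero => rfl
  | succ i ih => simp [run, ih]

lemma IsSteward.mono {n k d m : ℕ} {ε δ ε' δ' δ'' : ℝ} {S : Steward n k d m}
    (hS : IsSteward n k d m ε δ ε' δ' S) (hδ : δ' ≤ δ'') : IsSteward n k d m ε δ ε' δ'' S :=
  fun O => (hS O).trans hδ

namespace Owner

variable {n k d m T : ℕ} {ε δ : ℝ} (O : Owner n k d ε δ)

noncomputable def idealRun (t : Fin k → Fin T) : ℕ → List (Fin d → ℝ)
  | 0 => []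
  | i + 1 => idealRun t i ++ [fun j => gridRound ε T (shiftAt t i) ((O.act (idealRun t i)).2 j)]

noncomputable def idealAct (t : Fin k → Fin T) (i : ℕ) :
    ((Fin n → Bool) → Fin d → ℝ) × (Fin d → ℝ) :=
  O.act (O.idealRun t i)

lemma length_idealRun (t : Fin k → Fin T) (i : ℕ) : (O.idealRun t i).length = i := by
  induction i with
  | zero => rfl
  | succ i ih => simp [idealRun, ih]

lemma idealRun_congr {t t' : Fin k → Fin T} {i : ℕ} (h : ∀ l : Fin k, (l : ℕ) < i → t l = t' l) :
    O.idealRun t i = O.idealRun t' i := by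
  induction i with
  | zero => rfl
  | succ i ih =>
    rw [idealRun, idealRun, ih fun l hl => h l (by omega),
      shiftAt_congr fun l hl => h l (by omega)]

def QueryMisses (x : Fin n → Bool) (t : Fin k → Fin T) : Prop :=
  ∃ i : Fin k, ∃ j, |(O.idealAct t i).1 x j - (O.idealAct t i).2 j| > ε

noncomputable def badShifts (t : Fin k → Fin T) (i : Fin k) : Finset (Fin T) :=
  Finset.univ.filter fun v => ∃ j, ¬FarFromGrid ε T v ((O.idealAct t i).2 j)

def ShiftNearGrid (t : Fin k → Fin T) : Prop :=
  ∃ i : Fin k, t i ∈ O.badShifts t i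

lemma pr_queryMisses_le (hT : 0 < T) :
    pr (fun p : (Fin n → Bool) × (Fin k → Fin T) => O.QueryMisses p.1 p.2) ≤ k * δ := by
  have : Nonempty (Fin T) := ⟨⟨0, hT⟩⟩
  refine pr_prod_le (P := O.QueryMisses) fun t => ?_
  refine (pr_exists_le_card_mul (c := δ) (P := fun (i : Fin k) x =>
    ∃ j, |(O.idealAct t i).1 x j - (O.idealAct t i).2 j| > ε) fun i => ?_).trans_eq (by simp)
  exact O.conc (O.idealRun t i) (by simp [length_idealRun])

lemma badShifts_update (t : Fin k → Fin T) (i : Fin k) (v : Fin T) :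
    O.badShifts (Function.update t i v) i = O.badShifts t i := by
  have h : O.idealRun (Function.update t i v) i = O.idealRun t i :=
    O.idealRun_congr fun l hl => Function.update_of_ne (Fin.ne_of_lt hl) _ _
  unfold badShifts idealAct
  rw [h]

lemma pr_shiftNearGrid_le (hε : 0 < ε) (hT : 0 < T) :
    pr (O.ShiftNearGrid : (Fin k → Fin T) → Prop) ≤ k * (2 * d / T) := by
  have : Nonempty (Fin T) := ⟨⟨0, hT⟩⟩
  refine (pr_exists_le_card_mul (P := fun (i : Fin k) (t : Fin k → Fin T) => t i ∈ O.badShifts t i)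
    (c := 2 * d / T) fun i => ?_).trans_eq (by simp)
  refine (pr_apply_mem_le i (B := (O.badShifts · i)) (O.badShifts_update · i) (s := 2 * d)
    fun t => ?_).trans_eq (by simp)
  unfold badShifts
  convert card_exists_not_farFromGrid_le (T := T) hε (O.idealAct t i).2 using 3
  simp

lemma gridRound_idealAct_eq (hε : 0 < ε) (hT : 0 < T) {x : Fin n → Bool} {t : Fin k → Fin T}
    (hx : ¬O.QueryMisses x t) (ht : ¬O.ShiftNearGrid t) {i : ℕ} (hi : i < k) (j : Fin d) :
    gridRound ε T (shiftAt t i) ((O.idealAct t i).1 x j) =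
      gridRound ε T (shiftAt t i) ((O.idealAct t i).2 j) := by
  simp only [QueryMisses, ShiftNearGrid, badShifts, Finset.mem_filter, Finset.mem_univ,
    true_and, not_exists, not_not, gt_iff_lt, not_lt] at hx ht
  rw [shiftAt, dif_pos hi]
  exact gridRound_eq_of_farFromGrid hε hT (ht ⟨i, hi⟩ j) (hx ⟨i, hi⟩ j)

lemma roundingSteward_tracks_idealRun (hε : 0 < ε) (hT : 0 < T)
    (e : (Fin m → Bool) ≃ (Fin n → Bool) × (Fin k → Fin T)) (Z : Fin m → Bool)
    (hx : ¬O.QueryMisses (e Z).1 (e Z).2) (ht : ¬O.ShiftNearGrid (e Z).2) :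
    ∀ i ≤ k, (run O (roundingSteward ε e) Z i).map (fun p => p.1) = O.idealRun (e Z).2 i ∧
      ∀ p ∈ run O (roundingSteward ε e) Z i, ∀ j, |p.1 j - p.2.2 j| < 2 * ε * T := by
  set S := roundingSteward (d := d) ε e
  set x := (e Z).1
  set t := (e Z).2
  intro i
  induction i with
  | zero => simp [run, idealRun]
  | succ i ih =>
    intro hi
    obtain ⟨hfst, herr⟩ := ih (by omega)
    have hround := O.gridRound_idealAct_eq hε hT hx ht (by omega : i < k)
    have hstep : run O S Z (i + 1) = run O S Z i ++
        [(fun j => gridRound ε T (shiftAt t i) ((O.idealAct t i).1 x j),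
          (O.idealAct t i).1 x, (O.idealAct t i).2)] := by
      rw [run, idealAct, ← hfst]
      simp only [S, roundingSteward, List.length_map, length_run]
      rfl
    constructor
    · rw [hstep, List.map_append, hfst, idealRun]
      simp only [hround]
      rfl
    · intro p hp j
      rw [hstep, List.mem_append, List.mem_singleton] at hp
      rcases hp with hp | rfl
      · exact herr p hp j
      · simp only [hround]
        exact abs_gridRound_sub_lt hε hT _

end Owner

theorem isSteward_roundingSteward {n k d m T : ℕ} {ε δ : ℝ} (hε : 0 < ε) (hT : 0 < T)
    (e : (Fin m → Bool) ≃ (Fin n → Bool) × (Fin k → Fin T)) :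
    IsSteward n k d m ε δ (2 * ε * T) (k * δ + k * (2 * d / T)) (roundingSteward ε e) := by
  intro O
  have hfail : ∀ Z, (∃ p ∈ run O (roundingSteward ε e) Z k, ∃ j, |p.1 j - p.2.2 j| > 2 * ε * T) →
      O.QueryMisses (e Z).1 (e Z).2 ∨ O.ShiftNearGrid (e Z).2 := by
    rintro Z ⟨p, hp, j, hj⟩
    by_contra! h
    exact hj.not_gt ((O.roundingSteward_tracks_idealRun hε hT e Z h.1 h.2 k le_rfl).2 p hp j)
  let Bad : (Fin n → Bool) × (Fin k → Fin T) → Prop := fun p =>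
    O.QueryMisses p.1 p.2 ∨ O.ShiftNearGrid p.2
  calc _ ≤ pr fun Z => Bad (e Z) := pr_mono hfail
    _ = pr Bad := pr_comp_equiv e Bad
    _ ≤ pr (fun p : (Fin n → Bool) × (Fin k → Fin T) => O.QueryMisses p.1 p.2)
          + pr (fun p : (Fin n → Bool) × (Fin k → Fin T) => O.ShiftNearGrid p.2) :=
      pr_or_le _ _
    _ ≤ k * δ + k * (2 * d / T) := add_le_add (O.pr_queryMisses_le hT)
          ((pr_comp_snd _).trans_le (O.pr_shiftNearGrid_le hε hT))

lemma exists_two_pow_between {k d : ℕ} {γ : ℝ} (hk : 0 < k) (hd : 0 < d) (hγ : 0 < γ)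
    (hγ1 : γ ≤ 1) :
    ∃ b : ℕ, 2 * d * k < γ * 2 ^ b ∧ γ * 2 ^ b ≤ 4 * d * k ∧
      (b : ℝ) ≤ Real.logb 2 k + Real.logb 2 d + Real.logb 2 (1 / γ) + 2 := by
  have hdk : (1 : ℝ) ≤ d * k := by exact_mod_cast Nat.one_le_iff_ne_zero.2 (by positivity)
  have hx : 1 ≤ 2 * d * k / γ := by
    rw [le_div_iff₀ hγ]
    nlinarith
  obtain ⟨b, hlow, hhigh⟩ := exists_nat_pow_near hx one_lt_two
  rw [le_div_iff₀ hγ] at hlow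
  rw [div_lt_iff₀ hγ] at hhigh
  refine ⟨b + 1, by linarith, by rw [pow_succ]; linarith, ?_⟩
  have hlog : Real.logb 2 (2 ^ b) ≤ Real.logb 2 (2 * d * k * (1 / γ)) :=
    Real.logb_le_logb_of_le one_lt_two (by positivity)
      (by rw [mul_one_div, le_div_iff₀ hγ]; linarith)
  rw [Real.logb_pow, Real.logb_mul (by positivity) (by positivity),
    Real.logb_mul (by positivity) (by positivity), Real.logb_mul (by positivity) (by positivity),
    Real.logb_self_eq_one one_lt_two] at hlog
  push_cast
  linarith

/-- Saks–Zhou steward: there is an absolute constant `C > 0` such that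
for all positive `n, k, d` and all `ε > 0`, `δ > 0`, `0 < γ ≤ 1`, there is a one-query
`(ε′, kδ+γ)`-steward for `k` adaptively chosen `(ε,δ)`-concentrated functions
`{0,1}^n → ℝ^d` with error `ε′ ≤ C·k·d·ε/γ` and randomness complexity
`m ≤ n + C·k·(log₂ k + log₂ d + log₂(1/γ) + 1)`. -/
theorem saks_zhou_steward :
    ∃ C : ℝ, 0 < C ∧
      ∀ n k d : ℕ, 0 < n → 0 < k → 0 < d →
        ∀ ε δ γ : ℝ, 0 < ε → 0 < δ → 0 < γ → γ ≤ 1 →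
          ∃ (ε' : ℝ) (m : ℕ) (S : Steward n k d m),
            IsSteward n k d m ε δ ε' (k * δ + γ) S ∧
            ε' ≤ C * k * d * ε / γ ∧
            (m : ℝ) ≤ n + C * k * (Real.logb 2 (k : ℝ) + Real.logb 2 (d : ℝ) +
              Real.logb 2 (1 / γ) + 1) := by
  refine ⟨8, by norm_num, fun n k d _ hk hd ε δ γ hε _ hγ hγ1 => ?_⟩
  obtain ⟨b, hlow, hhigh, hb⟩ := exists_two_pow_between hk hd hγ hγ1
  let e : (Fin (n + k * b) → Bool) ≃ (Fin n → Bool) × (Fin k → Fin (2 ^ b)) :=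
    Fintype.equivOfCardEq (by simp [pow_add, ← pow_mul, mul_comm])
  refine ⟨2 * ε * (2 ^ b : ℕ), n + k * b, roundingSteward ε e,
    (isSteward_roundingSteward hε (by positivity) e).mono ?_, ?_, ?_⟩
  · gcongr (k : ℝ) * δ + ?_
    push_cast
    rw [mul_div_assoc', div_le_iff₀ (by positivity)]
    linarith
  · push_cast
    rw [le_div_iff₀ hγ]
    nlinarith
  · have hlogs : 0 ≤ Real.logb 2 k + Real.logb 2 d + Real.logb 2 (1 / γ) := by
      have := Real.logb_nonneg one_lt_two (one_le_one_div hγ hγ1)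
      have := Real.logb_nonneg one_lt_two (show (1 : ℝ) ≤ k by exact_mod_cast hk)
      have := Real.logb_nonneg one_lt_two (show (1 : ℝ) ≤ d by exact_mod_cast hd)
      linarith
    push_cast
    nlinarith
end
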